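/- There is no infinite sequence of strategy profiles ψ^(0), ψ^(1), ψ^(2), … such that for every t there exists a source n with ψ^(t+1) agreeing with ψ^(t) at every coordinate k ≠ n and U_n(ψ^(t+1)) > U_n(ψ^(t)). Consequently, every sequence of unilateral deviations in which the deviating source strictly increases its relay utility terminates after finitely many steps (at a profile from which no such improvement is possible). -/
import Mathlib


open Real Finset

/-- Number of sources selecting radio `c` under profile `ψ`. -/
def occ {N : ℕ} {C : Type*} [Fintype C] [DecidableEq C]
    (ψ : Fin N → Finset C) (c : C) : ℕ :=
  (Finset.univ.filter fun k => c ∈ ψ k).card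

/-- Data rate of source `n`: sum over its chosen radios of capacity shared equally. -/
noncomputable def rate {N : ℕ} {C : Type*} [Fintype C] [DecidableEq C]
    (cap : Fin N → C → ℝ) (ψ : Fin N → Finset C) (n : Fin N) : ℝ :=
  ∑ c ∈ ψ n, cap n c / (occ ψ c : ℝ)

/-- Satisfaction of source `n` (sigmoid of the data rate). -/
noncomputable def sat {N : ℕ} {C : Type*} [Fintype C] [DecidableEq C]
    (cap : Fin N → C → ℝ) (lam nu : ℝ) (req : Fin N → ℝ)
    (ψ : Fin N → Finset C) (n : Fin N) : ℝ :=
  1 / (1 + Real.exp (-lam * (rate cap ψ n - req n + nu / lam)))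

/-- Global satisfaction `Λ`. -/
noncomputable def glob {N : ℕ} {C : Type*} [Fintype C] [DecidableEq C]
    (cap : Fin N → C → ℝ) (lam nu : ℝ) (req : Fin N → ℝ)
    (ψ : Fin N → Finset C) : ℝ :=
  ∑ n, sat cap lam nu req ψ n

/-- Relay utility `U_n`. -/
noncomputable def relU {N : ℕ} {C : Type*} [Fintype C] [DecidableEq C]
    (cap : Fin N → C → ℝ) (lam nu : ℝ) (req : Fin N → ℝ)
    (n : Fin N) (ψ : Fin N → Finset C) : ℝ :=
  sat cap lam nu req ψ n +
    ∑ k ∈ Finset.univ.erase n,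
      (sat cap lam nu req ψ k - sat cap lam nu req (Function.update ψ n ∅) k)


lemma relU_eq {N : ℕ} {C : Type*} [Fintype C] [DecidableEq C]
    (cap : Fin N → C → ℝ) (lam nu : ℝ) (req : Fin N → ℝ)
    (n : Fin N) (ψ : Fin N → Finset C) :
    relU cap lam nu req n ψ =
      glob cap lam nu req ψ -
        ∑ k ∈ Finset.univ.erase n, sat cap lam nu req (Function.update ψ n ∅) k := by
  unfold relU glob
  rw [Finset.sum_sub_distrib, ← Finset.add_sum_erase Finset.univ _ (Finset.mem_univ n)]
  ring

lemma key {N : ℕ} {C : Type*} [Fintype C] [DecidableEq C]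
    (cap : Fin N → C → ℝ) (lam nu : ℝ) (req : Fin N → ℝ)
    (n : Fin N) (ψ ψ' : Fin N → Finset C) (h : ∀ k, k ≠ n → ψ' k = ψ k) :
    relU cap lam nu req n ψ' - relU cap lam nu req n ψ =
      glob cap lam nu req ψ' - glob cap lam nu req ψ := by
  have hupd : Function.update ψ' n ∅ = Function.update ψ n ∅ := by
    funext k
    by_cases hk : k = n
    · subst hk; simp
    · simp [Function.update_of_ne hk, h k hk]
  rw [relU_eq, relU_eq, hupd]
  ring

/-- there is no infinite sequence of unilateral deviations in which
the deviating source strictly increases its relay utility at every step. -/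
theorem stmt4 {N : ℕ} {C : Type*} [Fintype C] [DecidableEq C]
    (cap : Fin N → C → ℝ) (hcap : ∀ n c, 0 ≤ cap n c)
    (lam nu : ℝ) (hlam : 0 < lam) (hnu : 0 < nu) (req : Fin N → ℝ) :
    ¬ ∃ seq : ℕ → (Fin N → Finset C), ∀ t : ℕ, ∃ n : Fin N,
        (∀ k : Fin N, k ≠ n → seq (t + 1) k = seq t k) ∧
        relU cap lam nu req n (seq t) < relU cap lam nu req n (seq (t + 1)) := by
  rintro ⟨seq, hseq⟩
  have hmono : StrictMono (fun t => glob cap lam nu req (seq t)) := by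
    apply strictMono_nat_of_lt_succ
    intro t
    obtain ⟨n, hk, hlt⟩ := hseq t
    have := key cap lam nu req n (seq t) (seq (t+1)) hk
    linarith
  have hinj : Function.Injective seq := fun a b hab => by
    have := hmono.injective (a₁ := a) (a₂ := b) (by simp [hab])
    exact this
  exact (Finite.exists_ne_map_eq_of_infinite seq).elim
    (fun a ⟨b, hne, heq⟩ => hne (hinj heq))
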